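/- arXiv:math/0606299 — 5 statements merged into one kernel-verified Lean document; each statement's English description precedes it below -/
import Mathlib

section
/- Let g: Ω → ℂ be a smooth map on an open set Ω ⊆ ℂ with |g| < 1 everywhere, and define A = -4i·g_z/(1-|g|²)² and B = -4i·g²·(conj g)_{z̄}/(1-|g|²)². If g is harmonic into the hyperbolic disk, i.e. g_{z z̄} + (2 conj(g)/(1-|g|²))·g_z·g_{z̄} = 0, then A_{z̄} = B_z, and both equal -8i·g·g_z·(conj g)_{z̄}/(1-|g|²)³. -/
open Complex
open ComplexConjugate

/-- Wirtinger derivative `∂_z = (∂_u - i ∂_v)/2` of a map `ℂ → ℂ`. -/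
noncomputable def Wz (f : ℂ → ℂ) (p : ℂ) : ℂ :=
  (1/2) * (fderiv ℝ f p 1 - I * fderiv ℝ f p I)

/-- Wirtinger derivative `∂_z̄ = (∂_u + i ∂_v)/2` of a map `ℂ → ℂ`. -/
noncomputable def Wzb (f : ℂ → ℂ) (p : ℂ) : ℂ :=
  (1/2) * (fderiv ℝ f p 1 + I * fderiv ℝ f p I)

/-- Wirtinger derivative `∂_z` of a real-valued function on `ℂ`. -/
noncomputable def WzR (h : ℂ → ℝ) (p : ℂ) : ℂ :=
  (1/2) * ((fderiv ℝ h p 1 : ℝ) - I * (fderiv ℝ h p I : ℝ))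

/-- `1 - |w|²` as a complex number. -/
noncomputable def NS (w : ℂ) : ℂ := ((1 - Complex.normSq w : ℝ) : ℂ)

/-- `η = 8i·conj(g)·g_z/(1-|g|²)²`. -/
noncomputable def Eta (g : ℂ → ℂ) (z : ℂ) : ℂ :=
  8 * I * conj (g z) * Wz g z / (NS (g z))^2

section WirtingerHelpers
variable {f h : ℂ → ℂ} {p : ℂ}

lemma fderiv_mul_apply (hf : DifferentiableAt ℝ f p) (hh : DifferentiableAt ℝ h p) (v : ℂ) :
    fderiv ℝ (fun z => f z * h z) p v = f p * fderiv ℝ h p v + h p * fderiv ℝ f p v := by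
  rw [fderiv_fun_mul hf hh]; simp [smul_eq_mul]

lemma Wz_mul (f h : ℂ → ℂ) (hf : DifferentiableAt ℝ f p) (hh : DifferentiableAt ℝ h p) :
    Wz (fun z => f z * h z) p = Wz f p * h p + f p * Wz h p := by
  simp only [Wz, fderiv_mul_apply hf hh]; ring

lemma Wzb_mul (f h : ℂ → ℂ) (hf : DifferentiableAt ℝ f p) (hh : DifferentiableAt ℝ h p) :
    Wzb (fun z => f z * h z) p = Wzb f p * h p + f p * Wzb h p := by
  simp only [Wzb, fderiv_mul_apply hf hh]; ring

lemma diffAt_conj (hf : DifferentiableAt ℝ f p) :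
    DifferentiableAt ℝ (fun z => conj (f z)) p :=
  Complex.conjCLE.differentiableAt.comp p hf

lemma fderiv_conj_apply (hf : DifferentiableAt ℝ f p) (v : ℂ) :
    fderiv ℝ (fun z => conj (f z)) p v = conj (fderiv ℝ f p v) := by
  have h1 : fderiv ℝ ((⇑Complex.conjCLE) ∘ f) p =
      (fderiv ℝ (⇑Complex.conjCLE) (f p)).comp (fderiv ℝ f p) :=
    fderiv_comp p Complex.conjCLE.differentiableAt hf
  have h2 : fderiv ℝ (fun z => conj (f z)) p = fderiv ℝ ((⇑Complex.conjCLE) ∘ f) p := rfl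
  rw [h2, h1, Complex.conjCLE.fderiv]
  simp

lemma Wz_conj (f : ℂ → ℂ) (hf : DifferentiableAt ℝ f p) :
    Wz (fun z => conj (f z)) p = conj (Wzb f p) := by
  simp only [Wz, Wzb, fderiv_conj_apply hf, map_mul, map_add, map_one, map_div₀, map_ofNat,
    Complex.conj_I]
  ring

lemma Wzb_conj (f : ℂ → ℂ) (hf : DifferentiableAt ℝ f p) :
    Wzb (fun z => conj (f z)) p = conj (Wz f p) := by
  simp only [Wz, Wzb, fderiv_conj_apply hf, map_mul, map_sub, map_one, map_div₀, map_ofNat,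
    Complex.conj_I]
  ring

lemma fderiv_inv_apply (hf : DifferentiableAt ℝ f p) (h0 : f p ≠ 0) (v : ℂ) :
    fderiv ℝ (fun z => (f z)⁻¹) p v = -(fderiv ℝ f p v) / (f p)^2 := by
  have h1 : fderiv ℝ (Inv.inv ∘ f) p =
      (fderiv ℝ (Inv.inv : ℂ → ℂ) (f p)).comp (fderiv ℝ f p) :=
    fderiv_comp p (differentiableAt_inv h0) hf
  have h2 : fderiv ℝ (fun z => (f z)⁻¹) p = fderiv ℝ (Inv.inv ∘ f) p := rfl
  rw [h2, h1]
  simp only [ContinuousLinearMap.comp_apply, fderiv_inv' h0, ContinuousLinearMap.neg_apply,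
    ContinuousLinearMap.mulLeftRight_apply]
  field_simp [h0]

lemma Wz_inv (f : ℂ → ℂ) (hf : DifferentiableAt ℝ f p) (h0 : f p ≠ 0) :
    Wz (fun z => (f z)⁻¹) p = -Wz f p / (f p)^2 := by
  simp only [Wz, fderiv_inv_apply hf h0]; ring

lemma Wzb_inv (f : ℂ → ℂ) (hf : DifferentiableAt ℝ f p) (h0 : f p ≠ 0) :
    Wzb (fun z => (f z)⁻¹) p = -Wzb f p / (f p)^2 := by
  simp only [Wzb, fderiv_inv_apply hf h0]; ring

lemma Wz_const_sub (c : ℂ) (f : ℂ → ℂ) (hf : DifferentiableAt ℝ f p) :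
    Wz (fun z => c - f z) p = -Wz f p := by
  simp only [Wz, fderiv_const_sub c, ContinuousLinearMap.neg_apply]; ring

lemma Wzb_const_sub (c : ℂ) (f : ℂ → ℂ) (hf : DifferentiableAt ℝ f p) :
    Wzb (fun z => c - f z) p = -Wzb f p := by
  simp only [Wzb, fderiv_const_sub c, ContinuousLinearMap.neg_apply]; ring

lemma Wz_const_mul (c : ℂ) (f : ℂ → ℂ) (hf : DifferentiableAt ℝ f p) :
    Wz (fun z => c * f z) p = c * Wz f p := by
  simp only [Wz, fderiv_const_mul hf c, ContinuousLinearMap.smul_apply, smul_eq_mul]; ring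

lemma Wzb_const_mul (c : ℂ) (f : ℂ → ℂ) (hf : DifferentiableAt ℝ f p) :
    Wzb (fun z => c * f z) p = c * Wzb f p := by
  simp only [Wzb, fderiv_const_mul hf c, ContinuousLinearMap.smul_apply, smul_eq_mul]; ring

end WirtingerHelpers

theorem stmt0 (Ω : Set ℂ) (hΩ : IsOpen Ω) (g : ℂ → ℂ)
    (hg : ContDiffOn ℝ (⊤ : ℕ∞) g Ω)
    (hlt : ∀ z ∈ Ω, ‖g z‖ < 1)
    (hharm : ∀ z ∈ Ω, Wzb (Wz g) z + (2 * conj (g z) / NS (g z)) * Wz g z * Wzb g z = 0)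
    (A B : ℂ → ℂ)
    (hA : ∀ z, A z = -4 * I * Wz g z / (NS (g z))^2)
    (hB : ∀ z, B z = -4 * I * (g z)^2 * conj (Wz g z) / (NS (g z))^2) :
    ∀ z ∈ Ω, Wzb A z = Wz B z ∧
      Wzb A z = -8 * I * g z * Wz g z * conj (Wz g z) / (NS (g z))^3 := by
  intro z hz
  have hgz : ContDiffAt ℝ (⊤ : ℕ∞) g z := hg.contDiffAt (hΩ.mem_nhds hz)
  have dg : DifferentiableAt ℝ g z := hgz.differentiableAt (by simp)
  have hfd : ContDiffAt ℝ (⊤ : ℕ∞) (fderiv ℝ g) z := hgz.fderiv_right (by simp)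
  have hfd' : DifferentiableAt ℝ (fderiv ℝ g) z := hfd.differentiableAt (by simp)
  have d1 : DifferentiableAt ℝ (fun w => fderiv ℝ g w 1) z :=
    (ContinuousLinearMap.apply ℝ ℂ (1:ℂ)).differentiableAt.comp z hfd'
  have dI' : DifferentiableAt ℝ (fun w => fderiv ℝ g w I) z :=
    (ContinuousLinearMap.apply ℝ ℂ (I:ℂ)).differentiableAt.comp z hfd'
  have dWzg : DifferentiableAt ℝ (Wz g) z := by
    unfold Wz
    exact (d1.sub (dI'.const_mul I)).const_mul _
  have dcg : DifferentiableAt ℝ (fun w => conj (g w)) z := diffAt_conj dg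
  have dcWzg : DifferentiableAt ℝ (fun w => conj (Wz g w)) z := diffAt_conj dWzg
  set n : ℂ → ℂ := fun w => 1 - g w * conj (g w) with hn
  have dn : DifferentiableAt ℝ n z := (dg.mul dcg).const_sub 1
  have hNS : ∀ w, NS (g w) = n w := by
    intro w
    rw [hn]
    unfold NS
    push_cast
    rw [Complex.mul_conj]
  have hn0 : n z ≠ 0 := by
    rw [← hNS z]
    simp only [NS, ne_eq, Complex.ofReal_eq_zero]
    have h1 : ‖g z‖ < 1 := hlt z hz
    have h2 : Complex.normSq (g z) < 1 := by
      rw [← Complex.sq_norm]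
      nlinarith [norm_nonneg (g z)]
    intro hc; linarith
  have dnn : DifferentiableAt ℝ (fun w => n w * n w) z := dn.mul dn
  have hnn0 : n z * n z ≠ 0 := mul_ne_zero hn0 hn0
  have dF2 : DifferentiableAt ℝ (fun w => (n w * n w)⁻¹) z := dnn.inv hnn0
  have hW2 : Wzb (Wz g) z = -(2 * conj (g z) / n z * Wz g z * Wzb g z) := by
    have h := hharm z hz
    rw [hNS z] at h
    linear_combination h
  have hWzbn : Wzb n z = -(Wzb g z * conj (g z) + g z * conj (Wz g z)) := by
    have h1 : Wzb n z = -Wzb (fun w => g w * conj (g w)) z := by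
      rw [hn]; exact Wzb_const_sub 1 _ (dg.mul dcg)
    have h2 : Wzb (fun w => g w * conj (g w)) z
        = Wzb g z * conj (g z) + g z * Wzb (fun w => conj (g w)) z := Wzb_mul g _ dg dcg
    have h3 : Wzb (fun w => conj (g w)) z = conj (Wz g z) := Wzb_conj g dg
    rw [h1, h2, h3]
  have hWzn : Wz n z = -(Wz g z * conj (g z) + g z * conj (Wzb g z)) := by
    have h1 : Wz n z = -Wz (fun w => g w * conj (g w)) z := by
      rw [hn]; exact Wz_const_sub 1 _ (dg.mul dcg)
    have h2 : Wz (fun w => g w * conj (g w)) z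
        = Wz g z * conj (g z) + g z * Wz (fun w => conj (g w)) z := Wz_mul g _ dg dcg
    have h3 : Wz (fun w => conj (g w)) z = conj (Wzb g z) := Wz_conj g dg
    rw [h1, h2, h3]
  -- A part
  have dF1A : DifferentiableAt ℝ (fun w => -4 * I * Wz g w) z := dWzg.const_mul _
  have hAfun : A = fun w => (-4 * I * Wz g w) * (n w * n w)⁻¹ := by
    funext w
    rw [hA w, hNS w]
    ring
  have eA : Wzb A z = Wzb (fun w => -4 * I * Wz g w) z * (n z * n z)⁻¹
      + (-4 * I * Wz g z) * Wzb (fun w => (n w * n w)⁻¹) z := by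
    rw [hAfun]; exact Wzb_mul _ _ dF1A dF2
  have eA1 : Wzb (fun w => -4 * I * Wz g w) z = -4 * I * Wzb (Wz g) z :=
    Wzb_const_mul _ _ dWzg
  have eA2 : Wzb (fun w => (n w * n w)⁻¹) z = -Wzb (fun w => n w * n w) z / (n z * n z)^2 :=
    Wzb_inv _ dnn hnn0
  have eA3 : Wzb (fun w => n w * n w) z = Wzb n z * n z + n z * Wzb n z := Wzb_mul n n dn dn
  have hAval : Wzb A z = -8 * I * g z * Wz g z * conj (Wz g z) / (n z)^3 := by
    rw [eA, eA1, eA2, eA3, hWzbn, hW2]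
    field_simp
    ring
  -- B part
  have dgg : DifferentiableAt ℝ (fun w => g w * g w) z := dg.mul dg
  have dF1B : DifferentiableAt ℝ (fun w => -4 * I * (g w * g w * conj (Wz g w))) z :=
    (dgg.mul dcWzg).const_mul _
  have hBfun : B = fun w => (-4 * I * (g w * g w * conj (Wz g w))) * (n w * n w)⁻¹ := by
    funext w
    rw [hB w, hNS w]
    ring
  have eB : Wz B z = Wz (fun w => -4 * I * (g w * g w * conj (Wz g w))) z * (n z * n z)⁻¹
      + (-4 * I * (g z * g z * conj (Wz g z))) * Wz (fun w => (n w * n w)⁻¹) z := by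
    rw [hBfun]; exact Wz_mul _ _ dF1B dF2
  have eB1 : Wz (fun w => -4 * I * (g w * g w * conj (Wz g w))) z
      = -4 * I * Wz (fun w => g w * g w * conj (Wz g w)) z :=
    Wz_const_mul _ _ (dgg.mul dcWzg)
  have eB2 : Wz (fun w => g w * g w * conj (Wz g w)) z
      = Wz (fun w => g w * g w) z * conj (Wz g z) + (g z * g z) * Wz (fun w => conj (Wz g w)) z :=
    Wz_mul _ _ dgg dcWzg
  have eB3 : Wz (fun w => g w * g w) z = Wz g z * g z + g z * Wz g z := Wz_mul g g dg dg
  have eB4 : Wz (fun w => conj (Wz g w)) z = conj (Wzb (Wz g) z) := Wz_conj (Wz g) dWzg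
  have eB5 : Wz (fun w => (n w * n w)⁻¹) z = -Wz (fun w => n w * n w) z / (n z * n z)^2 :=
    Wz_inv _ dnn hnn0
  have eB6 : Wz (fun w => n w * n w) z = Wz n z * n z + n z * Wz n z := Wz_mul n n dn dn
  have hcn : conj (n z) = n z := by
    rw [hn]
    simp only [map_sub, map_one, map_mul, Complex.conj_conj]
    ring
  have hn0' : (1 : ℂ) - g z * conj (g z) ≠ 0 := by
    rw [hn] at hn0; exact hn0
  have hBval : Wz B z = -8 * I * g z * Wz g z * conj (Wz g z) / (n z)^3 := by
    rw [eB, eB1, eB2, eB3, eB4, eB5, eB6, hWzn, hW2]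
    simp only [map_neg, map_mul, map_div₀, map_ofNat, Complex.conj_conj, hcn]
    rw [hn]
    field_simp
    ring
  refine ⟨hAval.trans hBval.symm, ?_⟩
  rw [hNS z]
  exact hAval
end

section
/- Suppose g: Ω → ℂ is smooth, satisfies (1-|g|²)·g_{z z̄} + 2·conj(g)·g_z·g_{z̄} = 0 on a connected open set Ω ⊆ ℂ, and |g| ≡ 1 on Ω. Then g is constant. -/
open Complex
open ComplexConjugate

lemma fderiv_zero' (Ω : Set ℂ) (hΩ : IsOpen Ω)
    (g : ℂ → ℂ) (hg : ContDiffOn ℝ (⊤ : ℕ∞) g Ω)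
    (hprod : ∀ z ∈ Ω, (fderiv ℝ g z 1)^2 + (fderiv ℝ g z I)^2 = 0)
    (habs : ∀ z ∈ Ω, ‖g z‖ = 1) :
    ∀ z ∈ Ω, fderiv ℝ g z = 0 := by
  intro z hz
  have hmem : Ω ∈ nhds z := hΩ.mem_nhds hz
  have hd : DifferentiableAt ℝ g z :=
    ((hg.contDiffAt hmem).differentiableAt (by simp))
  set L := fderiv ℝ g z with hL
  set a := L 1 with ha
  set b := L I with hb
  -- g * conj g = 1 on Ω
  have hF : ∀ w ∈ Ω, g w * conj (g w) = 1 := by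
    intro w hw
    rw [Complex.mul_conj]
    norm_cast
    rw [← Complex.sq_norm, habs w hw, one_pow]
  have hFd := hd.hasFDerivAt.mul
    (((conjCLE : ℂ ≃L[ℝ] ℂ).toContinuousLinearMap.hasFDerivAt).comp z hd.hasFDerivAt)
  have hFd0 : HasFDerivAt (fun w => g w * conj (g w)) (0 : ℂ →L[ℝ] ℂ) z := by
    have : (fun w => g w * conj (g w)) =ᶠ[nhds z] fun _ => (1:ℂ) :=
      Filter.eventuallyEq_of_mem hmem hF
    exact (hasFDerivAt_const (1:ℂ) z).congr_of_eventuallyEq this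
  have heqL := hFd.unique hFd0
  have e1 : g z * conj a + conj (g z) * a = 0 := by
    have := congrArg (fun T : ℂ →L[ℝ] ℂ => T 1) heqL
    simpa [smul_eq_mul] using this
  have e2 : g z * conj b + conj (g z) * b = 0 := by
    have := congrArg (fun T : ℂ →L[ℝ] ℂ => T I) heqL
    simpa [smul_eq_mul] using this
  have hsum : a^2 + b^2 = 0 := hprod z hz
  -- algebra
  set u := g z with hu
  have hunit : u * conj u = 1 := hF z hz
  set α := conj u * a with hα
  set β := conj u * b with hβ
  have hre : ∀ γ : ℂ, γ + conj γ = 0 → γ.re = 0 := by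
    intro γ h1
    have h2 : ((2*γ.re : ℝ) : ℂ) = 0 := by
      push_cast
      have := Complex.add_conj γ
      rw [h1] at this
      push_cast at this
      linear_combination -this
    have h3 : (2:ℝ)*γ.re = 0 := by exact_mod_cast h2
    linarith
  have hαre : α.re = 0 := by
    refine hre α ?_
    simp only [hα, map_mul, Complex.conj_conj]
    linear_combination e1
  have hβre : β.re = 0 := by
    refine hre β ?_
    simp only [hβ, map_mul, Complex.conj_conj]
    linear_combination e2
  have hαβ : α^2 + β^2 = 0 := by
    have : α^2 + β^2 = (conj u)^2 * (a^2+b^2) := by rw [hα, hβ]; ring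
    rw [this, hsum, mul_zero]
  have him : α.im = 0 ∧ β.im = 0 := by
    have h4 := congrArg Complex.re hαβ
    simp only [Complex.add_re, pow_two, Complex.mul_re, hαre, hβre, Complex.zero_re] at h4
    constructor <;> nlinarith [h4]
  have hα0 : α = 0 := Complex.ext hαre him.1
  have hβ0 : β = 0 := Complex.ext hβre him.2
  have hu0 : conj u ≠ 0 := by
    simp only [ne_eq, map_eq_zero]
    intro h
    have := habs z hz
    rw [hu] at h
    rw [h] at this
    simp at this
  have ha0 : a = 0 := by
    rcases mul_eq_zero.mp (hα ▸ hα0) with h | h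
    · exact absurd h hu0
    · exact h
  have hb0 : b = 0 := by
    rcases mul_eq_zero.mp (hβ ▸ hβ0) with h | h
    · exact absurd h hu0
    · exact h
  ext v
  have hv : (v.re : ℝ) • (1:ℂ) + (v.im : ℝ) • (I:ℂ) = v := by
    simp [Complex.real_smul, Complex.re_add_im]
  calc L v = L ((v.re : ℝ) • (1:ℂ) + (v.im : ℝ) • (I:ℂ)) := by rw [hv]
    _ = (v.re : ℝ) • a + (v.im : ℝ) • b := by rw [map_add, map_smul, map_smul]
    _ = 0 := by rw [ha0, hb0, smul_zero, smul_zero, add_zero]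

theorem stmt5 (Ω : Set ℂ) (hΩ : IsOpen Ω) (hconn : IsPreconnected Ω)
    (g : ℂ → ℂ) (hg : ContDiffOn ℝ (⊤ : ℕ∞) g Ω)
    (heq : ∀ z ∈ Ω, NS (g z) * Wzb (Wz g) z + 2 * conj (g z) * Wz g z * Wzb g z = 0)
    (habs : ∀ z ∈ Ω, ‖g z‖ = 1) :
    ∃ c : ℂ, ∀ z ∈ Ω, g z = c := by
  -- derive the product condition
  have hprod : ∀ z ∈ Ω, (fderiv ℝ g z 1)^2 + (fderiv ℝ g z I)^2 = 0 := by
    intro z hz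
    have hNS : NS (g z) = 0 := by
      unfold NS
      rw [← Complex.sq_norm, habs z hz]
      norm_num
    have h1 := heq z hz
    rw [hNS, zero_mul, zero_add] at h1
    have hc : conj (g z) ≠ 0 := by
      simp only [ne_eq, map_eq_zero]
      intro h
      have := habs z hz
      rw [h] at this
      simp at this
    have h2 : Wz g z * Wzb g z = 0 := by
      rcases mul_eq_zero.mp h1 with h | h
      · rcases mul_eq_zero.mp h with h' | h'
        · rcases mul_eq_zero.mp h' with h'' | h''
          · norm_num at h''
          · exact absurd h'' hc
        · rw [h', zero_mul]
      · rw [h, mul_zero]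
    unfold Wz Wzb at h2
    have hI : (I:ℂ)^2 = -1 := Complex.I_sq
    linear_combination 4 * h2 + (fderiv ℝ g z I)^2 * hI
  have hzero := fderiv_zero' Ω hΩ g hg hprod habs
  -- local constancy
  have hloc : ∀ z ∈ Ω, ∃ ε > 0, Metric.ball z ε ⊆ Ω ∧ ∀ w ∈ Metric.ball z ε, g w = g z := by
    intro z hz
    obtain ⟨ε, hε, hball⟩ := Metric.isOpen_iff.mp hΩ z hz
    refine ⟨ε, hε, hball, fun w hw => ?_⟩
    have hdiff : DifferentiableOn ℝ g (Metric.ball z ε) := fun x hx =>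
      ((hg.contDiffAt (hΩ.mem_nhds (hball hx))).differentiableAt (by simp)).differentiableWithinAt
    have hfd : ∀ x ∈ Metric.ball z ε, fderivWithin ℝ g (Metric.ball z ε) x = 0 := by
      intro x hx
      rw [fderivWithin_of_isOpen Metric.isOpen_ball hx]
      exact hzero x (hball hx)
    exact (convex_ball z ε).is_const_of_fderivWithin_eq_zero hdiff hfd hw (Metric.mem_ball_self hε)
  -- connectedness
  rcases Set.eq_empty_or_nonempty Ω with hΩe | ⟨z₀, hz₀⟩
  · exact ⟨0, fun z hz => absurd (hΩe ▸ hz) (Set.notMem_empty z)⟩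
  refine ⟨g z₀, fun z hz => ?_⟩
  by_contra hne
  set U : Set ℂ := {w | w ∈ Ω ∧ g w = g z₀} with hU
  set V : Set ℂ := {w | w ∈ Ω ∧ g w ≠ g z₀} with hV
  have hUo : IsOpen U := by
    rw [Metric.isOpen_iff]
    rintro w ⟨hwΩ, hwg⟩
    obtain ⟨ε, hε, hball, hconst⟩ := hloc w hwΩ
    exact ⟨ε, hε, fun y hy => ⟨hball hy, by rw [hconst y hy, hwg]⟩⟩
  have hVo : IsOpen V := by
    rw [Metric.isOpen_iff]
    rintro w ⟨hwΩ, hwg⟩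
    obtain ⟨ε, hε, hball, hconst⟩ := hloc w hwΩ
    exact ⟨ε, hε, fun y hy => ⟨hball hy, by rw [hconst y hy]; exact hwg⟩⟩
  have hcover : Ω ⊆ U ∪ V := by
    intro w hw
    by_cases h : g w = g z₀
    · exact Or.inl ⟨hw, h⟩
    · exact Or.inr ⟨hw, h⟩
  obtain ⟨x, hxΩ, hxU, hxV⟩ := hconn U V hUo hVo hcover ⟨z₀, hz₀, hz₀, rfl⟩ ⟨z, hz, hz, hne⟩
  exact hxV.2 hxU.2
end

section
/- Let θ ∈ ℝ and define F(u+iv) = cosh(2θ)·u - sinh(2θ)·cosh v + i·sinh v and h(u+iv) = (1/2)cosh(2θ)·u·sinh v + (1/2)sinh(2θ)·v. Then F_z = (1/2)(cosh(2θ) + cosh v + i·sinh(2θ)·sinh v), F_{z̄} = (1/2)(cosh(2θ) - cosh v - i·sinh(2θ)·sinh v), and the conformality relation F_z·conj(F_{z̄}) = -η²/4 holds with η := 2h_z + (i/2)(conj(F)·F_z - F·conj(F_{z̄})). -/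
open Complex
open ComplexConjugate

/-- Horizontal projection of the translation-invariant example. -/
noncomputable def FT (θ : ℝ) (z : ℂ) : ℂ :=
  (Real.cosh (2*θ) : ℂ) * (z.re : ℂ) - (Real.sinh (2*θ) : ℂ) * (Real.cosh z.im : ℂ)
    + I * (Real.sinh z.im : ℂ)

/-- Height function of the translation-invariant example. -/
noncomputable def hT (θ : ℝ) (z : ℂ) : ℝ :=
  (1/2) * Real.cosh (2*θ) * z.re * Real.sinh z.im + (1/2) * Real.sinh (2*θ) * z.im

lemma FT_hasFDeriv (θ : ℝ) (p : ℂ) :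
    HasFDerivAt (FT θ)
      ((Real.cosh (2*θ) : ℂ) • (Complex.ofRealCLM.comp Complex.reCLM)
        - (Real.sinh (2*θ) : ℂ) • (Complex.ofRealCLM.comp (Real.sinh p.im • Complex.imCLM))
        + I • (Complex.ofRealCLM.comp (Real.cosh p.im • Complex.imCLM))) p := by
  have hre : HasFDerivAt (fun z : ℂ => ((z.re : ℝ) : ℂ))
      (Complex.ofRealCLM.comp Complex.reCLM) p :=
    Complex.ofRealCLM.hasFDerivAt.comp p Complex.reCLM.hasFDerivAt
  have him : HasFDerivAt (fun z : ℂ => z.im) Complex.imCLM p := Complex.imCLM.hasFDerivAt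
  have hc : HasFDerivAt (fun z : ℂ => ((Real.cosh z.im : ℝ) : ℂ))
      (Complex.ofRealCLM.comp (Real.sinh p.im • Complex.imCLM)) p :=
    Complex.ofRealCLM.hasFDerivAt.comp p him.cosh
  have hs : HasFDerivAt (fun z : ℂ => ((Real.sinh z.im : ℝ) : ℂ))
      (Complex.ofRealCLM.comp (Real.cosh p.im • Complex.imCLM)) p :=
    Complex.ofRealCLM.hasFDerivAt.comp p him.sinh
  exact ((hre.const_mul ((Real.cosh (2*θ) : ℝ) : ℂ)).sub
    (hc.const_mul ((Real.sinh (2*θ) : ℝ) : ℂ))).add (hs.const_mul I)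

lemma hT_hasFDeriv (θ : ℝ) (p : ℂ) :
    HasFDerivAt (hT θ)
      (((1/2 : ℝ) * Real.cosh (2*θ)) •
          (p.re • (Real.cosh p.im • Complex.imCLM) + Real.sinh p.im • Complex.reCLM)
        + ((1/2 : ℝ) * Real.sinh (2*θ)) • Complex.imCLM) p := by
  have hre : HasFDerivAt (fun z : ℂ => z.re) Complex.reCLM p := Complex.reCLM.hasFDerivAt
  have him : HasFDerivAt (fun z : ℂ => z.im) Complex.imCLM p := Complex.imCLM.hasFDerivAt
  have hmul : HasFDerivAt (fun z : ℂ => z.re * Real.sinh z.im)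
      (p.re • (Real.cosh p.im • Complex.imCLM) + Real.sinh p.im • Complex.reCLM) p :=
    hre.mul him.sinh
  have h1 := hmul.const_mul ((1/2 : ℝ) * Real.cosh (2*θ))
  have h2 := him.const_mul ((1/2 : ℝ) * Real.sinh (2*θ))
  have := h1.add h2
  have heq : hT θ = fun z : ℂ =>
      (1/2 : ℝ) * Real.cosh (2*θ) * (z.re * Real.sinh z.im) + (1/2) * Real.sinh (2*θ) * z.im := by
    funext z; unfold hT; ring
  rw [heq]
  exact this

theorem stmt9 (θ : ℝ) : ∀ z : ℂ,
    Wz (FT θ) z = (1/2) * ((Real.cosh (2*θ) : ℂ) + (Real.cosh z.im : ℂ)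
        + I * (Real.sinh (2*θ) : ℂ) * (Real.sinh z.im : ℂ)) ∧
    Wzb (FT θ) z = (1/2) * ((Real.cosh (2*θ) : ℂ) - (Real.cosh z.im : ℂ)
        - I * (Real.sinh (2*θ) : ℂ) * (Real.sinh z.im : ℂ)) ∧
    Wz (FT θ) z * conj (Wzb (FT θ) z)
      = -(2 * WzR (hT θ) z
          + (I/2) * (conj (FT θ z) * Wz (FT θ) z - FT θ z * conj (Wzb (FT θ) z)))^2 / 4 := by
  intro z
  set c : ℝ := Real.cosh (2*θ) with hcdef
  set s : ℝ := Real.sinh (2*θ) with hsdef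
  set C : ℝ := Real.cosh z.im with hCdef
  set S : ℝ := Real.sinh z.im with hSdef
  have hF := (FT_hasFDeriv θ z).fderiv
  have hh := (hT_hasFDeriv θ z).fderiv
  rw [← hcdef, ← hsdef, ← hCdef, ← hSdef] at hF hh
  have h1 : Wz (FT θ) z = (1/2) * ((c : ℂ) + (C : ℂ) + I * (s : ℂ) * (S : ℂ)) := by
    unfold Wz
    rw [hF]
    simp only [ContinuousLinearMap.add_apply, ContinuousLinearMap.sub_apply,
      ContinuousLinearMap.smul_apply, ContinuousLinearMap.comp_apply,
      Complex.ofRealCLM_apply, Complex.reCLM_apply, Complex.imCLM_apply,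
      Complex.one_re, Complex.one_im, Complex.I_re, Complex.I_im, smul_eq_mul]
    push_cast
    linear_combination (-(C : ℂ)/2) * Complex.I_sq
  have h2 : Wzb (FT θ) z = (1/2) * ((c : ℂ) - (C : ℂ) - I * (s : ℂ) * (S : ℂ)) := by
    unfold Wzb
    rw [hF]
    simp only [ContinuousLinearMap.add_apply, ContinuousLinearMap.sub_apply,
      ContinuousLinearMap.smul_apply, ContinuousLinearMap.comp_apply,
      Complex.ofRealCLM_apply, Complex.reCLM_apply, Complex.imCLM_apply,
      Complex.one_re, Complex.one_im, Complex.I_re, Complex.I_im, smul_eq_mul]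
    push_cast
    linear_combination ((C : ℂ)/2) * Complex.I_sq
  have h3 : WzR (hT θ) z = (1/2) * (((1/2 : ℝ) * c * S : ℝ)
      - I * (((1/2 : ℝ) * c * z.re * C + (1/2 : ℝ) * s : ℝ))) := by
    unfold WzR
    rw [hh]
    simp only [ContinuousLinearMap.add_apply, ContinuousLinearMap.sub_apply,
      ContinuousLinearMap.smul_apply, ContinuousLinearMap.comp_apply,
      Complex.reCLM_apply, Complex.imCLM_apply,
      Complex.one_re, Complex.one_im, Complex.I_re, Complex.I_im, smul_eq_mul]
    push_cast
    ring
  have hFz : FT θ z = (c : ℂ) * (z.re : ℂ) - (s : ℂ) * (C : ℂ) + I * (S : ℂ) := rfl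
  refine ⟨h1, h2, ?_⟩
  rw [h1, h2, h3, hFz]
  have hcs : (c : ℂ)^2 = (s : ℂ)^2 + 1 := by
    have h0 := Real.cosh_sq_sub_sinh_sq (2*θ)
    have h : c^2 = s^2 + 1 := by rw [hcdef, hsdef]; linarith
    exact_mod_cast h
  have hCS : (C : ℂ)^2 = (S : ℂ)^2 + 1 := by
    have h0 := Real.cosh_sq_sub_sinh_sq z.im
    have h : C^2 = S^2 + 1 := by rw [hCdef, hSdef]; linarith
    exact_mod_cast h
  have hI : (I : ℂ)^2 = -1 := Complex.I_sq
  simp only [map_add, map_sub, map_mul, map_one, map_ofNat, Complex.conj_ofReal,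
    Complex.conj_I, map_div₀]
  push_cast
  linear_combination ((1/16 : ℂ)*(s:ℂ)^2 + (1/8)*(s:ℂ)^2*(S:ℂ)^2 + (1/8)*(s:ℂ)^2*(S:ℂ)^2*I^2
      + (1/16)*(s:ℂ)^2*(S:ℂ)^4 - (1/16)*(s:ℂ)^2*(S:ℂ)^4*I^2 + (1/16)*(s:ℂ)^2*(S:ℂ)^4*I^4
      + (1/8)*(s:ℂ)^2*(C:ℂ)^2 - (1/8)*(s:ℂ)^2*(C:ℂ)^2*(S:ℂ)^2
      + (1/8)*(s:ℂ)^2*(C:ℂ)^2*(S:ℂ)^2*I^2 + (1/16)*(s:ℂ)^2*(C:ℂ)^4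
      + (1/8)*(c:ℂ)*(s:ℂ)*(S:ℂ)*I - (1/4)*(c:ℂ)*(s:ℂ)*(S:ℂ)^3*I
      + (1/8)*(c:ℂ)*(s:ℂ)*(S:ℂ)^3*I^3 + (1/8)*(c:ℂ)*(s:ℂ)*(C:ℂ)^2*(S:ℂ)*I
      - (3/16)*(c:ℂ)^2*(S:ℂ)^2 + (1/16)*(c:ℂ)^2*(S:ℂ)^2*I^2) * hI
    + ((1/4 : ℂ) + (1/4)*(S:ℂ)^2) * hcs
    + (-(1/4 : ℂ) - (3/16)*(s:ℂ)^2 + (1/16)*(s:ℂ)^2*(S:ℂ)^2 - (1/16)*(s:ℂ)^2*(C:ℂ)^2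
      - (1/4)*(c:ℂ)*(s:ℂ)*(S:ℂ)*I) * hCS
end

section
/- The map F: {u+iv : u > 0} → ℂ defined by F(u+iv) = -2·sinh v·cosh v·tanh u + i·(2u - tanh u) is a bijection from the open right half-plane onto the open upper half-plane {w : Im w > 0}. -/
open Complex
open ComplexConjugate

/-!
The map is triangular: its imaginary part `ψ(u) = 2u - tanh u` depends only on `u`, and for fixed
`u > 0` its real part `-sinh(2v) tanh u` is a bijection in `v`. Since `ψ' = 1 + tanh² u > 0`,
`ψ(0) = 0` and `ψ(u) → ±∞`, the function `ψ` maps `(0, ∞)` bijectively onto itself.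
-/

open Function Set Filter

theorem Complex.bijOn_ofReal_add_I_mul {f : ℝ → ℝ} {g : ℝ → ℝ → ℝ} {s t : Set ℝ}
    (hf : BijOn f s t) (hg : ∀ u ∈ s, Bijective (g u)) :
    BijOn (fun z : ℂ => (g z.re z.im : ℂ) + I * (f z.re : ℂ)) (re ⁻¹' s) (im ⁻¹' t) := by
  refine ⟨fun z hz => by simpa using hf.mapsTo hz, fun z₁ hz₁ z₂ hz₂ h => ?_, fun w hw => ?_⟩
  · have hre : z₁.re = z₂.re := hf.injOn hz₁ hz₂ (by simpa using congrArg im h)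
    have him : g z₁.re z₁.im = g z₁.re z₂.im := by simpa [← hre] using congrArg re h
    exact Complex.ext hre ((hg _ hz₁).injective him)
  · obtain ⟨u, hu, hfu⟩ := hf.surjOn hw
    obtain ⟨v, hv⟩ := (hg u hu).surjective w.re
    exact ⟨⟨u, v⟩, hu, Complex.ext (by simpa using hv) (by simpa using hfu)⟩

namespace Real

theorem tanh_pos {x : ℝ} (hx : 0 < x) : 0 < tanh x := by
  rw [tanh_eq_sinh_div_cosh]
  exact div_pos (sinh_pos_iff.2 hx) (cosh_pos x)

theorem hasDerivAt_tanh (x : ℝ) : HasDerivAt tanh (1 - tanh x ^ 2) x := by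
  have h := (hasDerivAt_sinh x).div (hasDerivAt_cosh x) (cosh_pos x).ne'
  rw [show sinh / cosh = tanh from funext fun y => (tanh_eq_sinh_div_cosh y).symm] at h
  refine h.congr_deriv ?_
  rw [tanh_eq_sinh_div_cosh]
  field_simp

theorem hasDerivAt_two_mul_sub_tanh (x : ℝ) :
    HasDerivAt (fun u => 2 * u - tanh u) (1 + tanh x ^ 2) x := by
  refine (((hasDerivAt_id x).const_mul 2).sub (hasDerivAt_tanh x)).congr_deriv ?_
  ring

theorem strictMono_two_mul_sub_tanh : StrictMono fun u => 2 * u - tanh u :=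
  strictMono_of_hasDerivAt_pos hasDerivAt_two_mul_sub_tanh fun x => by positivity

theorem surjective_two_mul_sub_tanh : Surjective fun u => 2 * u - tanh u := by
  have hcont : Continuous fun u => 2 * u - tanh u :=
    continuous_iff_continuousAt.2 fun x => (hasDerivAt_two_mul_sub_tanh x).continuousAt
  refine hcont.surjective ?_ ?_
  · refine tendsto_atTop_mono (fun u => ?_)
      (tendsto_atTop_add_const_right _ (-1) (tendsto_id.const_mul_atTop two_pos))
    linarith [tanh_lt_one u, show id u = u from rfl]
  · refine tendsto_atBot_mono (fun u => ?_)
      (tendsto_atBot_add_const_right _ 1 (tendsto_id.const_mul_atBot two_pos))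
    linarith [neg_one_lt_tanh u, show id u = u from rfl]

theorem bijOn_two_mul_sub_tanh_Ioi : BijOn (fun u => 2 * u - tanh u) (Ioi 0) (Ioi 0) := by
  have hzero : (fun u => 2 * u - tanh u) 0 = 0 := by simp
  have hpos : ∀ u, 0 < 2 * u - tanh u ↔ 0 < u := fun u => by
    simpa only [hzero] using strictMono_two_mul_sub_tanh.lt_iff_lt (a := 0) (b := u)
  refine ⟨fun u hu => (hpos u).2 hu, strictMono_two_mul_sub_tanh.injective.injOn, fun y hy => ?_⟩
  obtain ⟨u, rfl⟩ := surjective_two_mul_sub_tanh y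
  exact ⟨u, (hpos u).1 hy, rfl⟩

theorem bijective_neg_two_mul_sinh_mul_cosh_mul {c : ℝ} (hc : c ≠ 0) :
    Bijective fun v => -2 * sinh v * cosh v * c := by
  have h : (fun v => -2 * sinh v * cosh v * c) = (· * -c) ∘ sinh ∘ (2 * ·) := by
    funext v
    simp only [comp_apply, sinh_two_mul]
    ring
  rw [h]
  exact (mulRight_bijective₀ _ (neg_ne_zero.2 hc)).comp
    (sinh_bijective.comp (mulLeft_bijective₀ 2 two_ne_zero))

end Real

theorem stmt15 :
    Set.BijOn (fun z : ℂ =>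
        ((-2 * Real.sinh z.im * Real.cosh z.im * Real.tanh z.re : ℝ) : ℂ)
          + I * ((2 * z.re - Real.tanh z.re : ℝ) : ℂ))
      {z : ℂ | 0 < z.re} {w : ℂ | 0 < w.im} :=
  Complex.bijOn_ofReal_add_I_mul Real.bijOn_two_mul_sub_tanh_Ioi fun _ hu =>
    Real.bijective_neg_two_mul_sinh_mul_cosh_mul (Real.tanh_pos hu).ne'
end

section
/- Define g on Σ = {u+iv : u > 0} by g(u+iv) = (-1 - i·cosh(2u)·sinh(2v))/(sinh(2u) + cosh(2u)·cosh(2v)). Then |g| < 1 on Σ, g satisfies the hyperbolic harmonic map equation, and g_z = -(cosh(2u)-1)·(cosh(2u) + sinh(2u)·cosh(2v) + i·sinh(2v))/(sinh(2u)+cosh(2u)·cosh(2v))²; in particular g_z never vanishes on Σ. -/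
open Complex
open ComplexConjugate

/-- Conjugated semitrough Gauss map. -/
noncomputable def gS2 (z : ℂ) : ℂ :=
  (-1 - I * (Real.cosh (2*z.re) : ℂ) * (Real.sinh (2*z.im) : ℂ))
    / ((Real.sinh (2*z.re) : ℂ) + (Real.cosh (2*z.re) : ℂ) * (Real.cosh (2*z.im) : ℂ))


/-!
Write `A, B, C, S` for `cosh 2u, sinh 2u, cosh 2v, sinh 2v` and `D = B + A C`, so that
`g = (-1 - i A S) / D`. Since `u = (z + z̄)/2` and `v = (z - z̄)/(2i)`, the operators `∂_z` and
`∂_z̄` act by `A ↦ B`, `B ↦ A`, `C ↦ ∓ i S`, `S ↦ ∓ i C`. The identity `(A + B C)² + S² = D²`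
turns the quotient rule into `g_z = (1 - A) / F` and `g_z̄ = (1 + A) / F` with `F = A + B C - i S`,
whose real part is positive. Differentiating once more gives `g_{z z̄} = (i A S - 1) B / F²`.
Since also `1 - |g|² = 2 B / D` and `ḡ = (-1 + i A S) / D`, the harmonic map equation reduces to
`B² = A² - 1`.
-/

open Topology

def HasWirtingerAt (f : ℂ → ℂ) (p q z : ℂ) : Prop :=
  HasFDerivAt f (p • ContinuousLinearMap.id ℝ ℂ + q • conjCLE.toContinuousLinearMap) z

namespace HasWirtingerAt

variable {f g : ℂ → ℂ} {p q r s z : ℂ}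

theorem fderiv_apply (hf : HasWirtingerAt f p q z) (h : ℂ) :
    fderiv ℝ f z h = p * h + q * conj h := by
  simp [hf.fderiv]

theorem wz_eq (hf : HasWirtingerAt f p q z) : Wz f z = p := by
  rw [Wz, hf.fderiv_apply, hf.fderiv_apply, conj_I, map_one]
  linear_combination (q - p) / 2 * I_sq

theorem wzb_eq (hf : HasWirtingerAt f p q z) : Wzb f z = q := by
  rw [Wzb, hf.fderiv_apply, hf.fderiv_apply, conj_I, map_one]
  linear_combination (p - q) / 2 * I_sq

theorem of_hasFDerivAt {L : ℂ →L[ℝ] ℂ} (hf : HasFDerivAt f L z)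
    (hL : ∀ h, L h = p * h + q * conj h) : HasWirtingerAt f p q z :=
  hf.congr_fderiv (ContinuousLinearMap.ext fun h => by simp [hL])

theorem congr_of_eventuallyEq (hf : HasWirtingerAt f p q z) (hg : g =ᶠ[𝓝 z] f) :
    HasWirtingerAt g p q z :=
  HasFDerivAt.congr_of_eventuallyEq hf hg

theorem add (hf : HasWirtingerAt f p q z) (hg : HasWirtingerAt g r s z) :
    HasWirtingerAt (fun w => f w + g w) (p + r) (q + s) z :=
  of_hasFDerivAt (HasFDerivAt.add hf hg) fun h => by simp; ring

theorem sub (hf : HasWirtingerAt f p q z) (hg : HasWirtingerAt g r s z) :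
    HasWirtingerAt (fun w => f w - g w) (p - r) (q - s) z :=
  of_hasFDerivAt (HasFDerivAt.sub hf hg) fun h => by simp; ring

theorem mul (hf : HasWirtingerAt f p q z) (hg : HasWirtingerAt g r s z) :
    HasWirtingerAt (fun w => f w * g w) (f z * r + g z * p) (f z * s + g z * q) z :=
  of_hasFDerivAt (HasFDerivAt.mul hf hg) fun h => by simp; ring

theorem _root_.HasDerivAt.comp_hasWirtingerAt {φ : ℂ → ℂ} {φ' : ℂ} (hφ : HasDerivAt φ φ' (f z))
    (hf : HasWirtingerAt f p q z) : HasWirtingerAt (fun w => φ (f w)) (φ' * p) (φ' * q) z :=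
  of_hasFDerivAt (hφ.comp_hasFDerivAt z hf) fun h => by simp; ring

theorem div (hf : HasWirtingerAt f p q z) (hg : HasWirtingerAt g r s z) (hz : g z ≠ 0) :
    HasWirtingerAt (fun w => f w / g w)
      ((g z * p - f z * r) / g z ^ 2) ((g z * q - f z * s) / g z ^ 2) z := by
  have h := hf.mul ((hasDerivAt_inv hz).comp_hasWirtingerAt hg)
  simp only [← div_eq_mul_inv] at h
  convert h using 1 <;> field_simp <;> ring

end HasWirtingerAt

theorem hasWirtingerAt_const (c z : ℂ) : HasWirtingerAt (fun _ => c) 0 0 z :=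
  HasWirtingerAt.of_hasFDerivAt (hasFDerivAt_const c z) fun h => by simp

theorem HasDerivAt.hasWirtingerAt_ofReal_comp_re {φ : ℝ → ℝ} {φ' : ℝ} {z : ℂ}
    (hφ : HasDerivAt φ φ' z.re) :
    HasWirtingerAt (fun w => (φ w.re : ℂ)) (φ' / 2) (φ' / 2) z :=
  HasWirtingerAt.of_hasFDerivAt
    (ofRealCLM.hasFDerivAt.comp z (hφ.comp_hasFDerivAt z reCLM.hasFDerivAt)) fun h => by
      apply Complex.ext <;> simp
      ring

theorem HasDerivAt.hasWirtingerAt_ofReal_comp_im {φ : ℝ → ℝ} {φ' : ℝ} {z : ℂ}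
    (hφ : HasDerivAt φ φ' z.im) :
    HasWirtingerAt (fun w => (φ w.im : ℂ)) (-I * φ' / 2) (I * φ' / 2) z :=
  HasWirtingerAt.of_hasFDerivAt
    (ofRealCLM.hasFDerivAt.comp z (hφ.comp_hasFDerivAt z imCLM.hasFDerivAt)) fun h => by
      apply Complex.ext <;> simp <;> ring

local notation "ch2u" z:max => ((Real.cosh (2 * Complex.re z) : ℝ) : ℂ)
local notation "sh2u" z:max => ((Real.sinh (2 * Complex.re z) : ℝ) : ℂ)
local notation "ch2v" z:max => ((Real.cosh (2 * Complex.im z) : ℝ) : ℂ)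
local notation "sh2v" z:max => ((Real.sinh (2 * Complex.im z) : ℝ) : ℂ)

section HalfPlane

variable {z : ℂ}

theorem hasWirtingerAt_cosh_two_re (z : ℂ) :
    HasWirtingerAt (fun w => ch2u w) (sh2u z) (sh2u z) z := by
  have h : HasDerivAt (fun t => Real.cosh (2 * t)) (Real.sinh (2 * z.re) * 2) z.re := by
    simpa using ((hasDerivAt_id z.re).const_mul 2).cosh
  convert h.hasWirtingerAt_ofReal_comp_re using 1 <;> push_cast <;> ring

theorem hasWirtingerAt_sinh_two_re (z : ℂ) :
    HasWirtingerAt (fun w => sh2u w) (ch2u z) (ch2u z) z := by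
  have h : HasDerivAt (fun t => Real.sinh (2 * t)) (Real.cosh (2 * z.re) * 2) z.re := by
    simpa using ((hasDerivAt_id z.re).const_mul 2).sinh
  convert h.hasWirtingerAt_ofReal_comp_re using 1 <;> push_cast <;> ring

theorem hasWirtingerAt_cosh_two_im (z : ℂ) :
    HasWirtingerAt (fun w => ch2v w) (-I * sh2v z) (I * sh2v z) z := by
  have h : HasDerivAt (fun t => Real.cosh (2 * t)) (Real.sinh (2 * z.im) * 2) z.im := by
    simpa using ((hasDerivAt_id z.im).const_mul 2).cosh
  convert h.hasWirtingerAt_ofReal_comp_im using 1 <;> push_cast <;> ring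

theorem hasWirtingerAt_sinh_two_im (z : ℂ) :
    HasWirtingerAt (fun w => sh2v w) (-I * ch2v z) (I * ch2v z) z := by
  have h : HasDerivAt (fun t => Real.sinh (2 * t)) (Real.cosh (2 * z.im) * 2) z.im := by
    simpa using ((hasDerivAt_id z.im).const_mul 2).sinh
  convert h.hasWirtingerAt_ofReal_comp_im using 1 <;> push_cast <;> ring

theorem sinh_two_re_pos (hz : 0 < z.re) : 0 < Real.sinh (2 * z.re) :=
  Real.sinh_pos_iff.2 (by linarith)

theorem gS2_denom_pos (hz : 0 < z.re) :
    0 < Real.sinh (2 * z.re) + Real.cosh (2 * z.re) * Real.cosh (2 * z.im) :=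
  add_pos (sinh_two_re_pos hz) (mul_pos (Real.cosh_pos _) (Real.cosh_pos _))

theorem gS2_denom_ne_zero (hz : 0 < z.re) : sh2u z + ch2u z * ch2v z ≠ 0 := by
  exact_mod_cast (gS2_denom_pos hz).ne'

theorem dz_denom_ne_zero (hz : 0 < z.re) : ch2u z + sh2u z * ch2v z - I * sh2v z ≠ 0 := by
  intro h
  have hre := congrArg re h
  simp only [sub_re, add_re, mul_re, ofReal_re, ofReal_im, I_re, I_im, zero_re] at hre
  nlinarith [Real.cosh_pos (2 * z.re), sinh_two_re_pos hz, Real.cosh_pos (2 * z.im)]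

theorem ofReal_cosh_sq_sub_ofReal_sinh_sq (x : ℝ) :
    (Real.cosh x : ℂ) ^ 2 - (Real.sinh x : ℂ) ^ 2 = 1 := by
  exact_mod_cast Real.cosh_sq_sub_sinh_sq x

theorem mul_dz_denom_eq_gS2_denom_sq (z : ℂ) :
    (ch2u z + sh2u z * ch2v z + I * sh2v z) * (ch2u z + sh2u z * ch2v z - I * sh2v z) =
      (sh2u z + ch2u z * ch2v z) ^ 2 := by
  linear_combination (1 - ch2v z ^ 2) * ofReal_cosh_sq_sub_ofReal_sinh_sq (2 * z.re)
    - ofReal_cosh_sq_sub_ofReal_sinh_sq (2 * z.im) - sh2v z ^ 2 * I_sq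

theorem hasWirtingerAt_gS2 (hz : 0 < z.re) :
    HasWirtingerAt gS2 ((1 - ch2u z) / (ch2u z + sh2u z * ch2v z - I * sh2v z))
      ((1 + ch2u z) / (ch2u z + sh2u z * ch2v z - I * sh2v z)) z := by
  have hD := gS2_denom_ne_zero hz
  have h := ((hasWirtingerAt_const (-1) z).sub
    (((hasWirtingerAt_const I z).mul (hasWirtingerAt_cosh_two_re z)).mul
      (hasWirtingerAt_sinh_two_im z))).div
    ((hasWirtingerAt_sinh_two_re z).add
      ((hasWirtingerAt_cosh_two_re z).mul (hasWirtingerAt_cosh_two_im z))) hD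
  have hF := dz_denom_ne_zero hz
  have hAB := ofReal_cosh_sq_sub_ofReal_sinh_sq (2 * z.re)
  have hCS := ofReal_cosh_sq_sub_ofReal_sinh_sq (2 * z.im)
  have hEF := mul_dz_denom_eq_gS2_denom_sq z
  set A := ch2u z
  set B := sh2u z
  set C := ch2v z
  set S := sh2v z
  -- modulo `A² - B² = 1`, `C² - S² = 1` and `I² = -1` the two quotient-rule numerators are
  -- `∓ (A ∓ 1) (A + B C + I S)`; then `hEF` cancels the factor `A + B C + I S`
  convert h using 1
  · rfl
  · rw [div_eq_div_iff hF (pow_ne_zero 2 hD)]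
    linear_combination (A - 1) * hEF - (A + B * C - I * S) * ((A ^ 2 * C ^ 2 - A ^ 2 * S ^ 2
      + A * B * C) * I_sq + (1 + S * I + S ^ 2 - C ^ 2) * hAB + (-1 - B ^ 2) * hCS)
  · rw [div_eq_div_iff hF (pow_ne_zero 2 hD)]
    linear_combination -(A + 1) * hEF + (A + B * C - I * S) * ((A ^ 2 * C ^ 2 - A ^ 2 * S ^ 2
      + A * B * C) * I_sq + (1 - S * I + S ^ 2 - C ^ 2) * hAB + (-1 - B ^ 2) * hCS)

theorem wzb_wz_gS2 (hz : 0 < z.re) :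
    Wzb (Wz gS2) z = (I * ch2u z * sh2v z - 1) * sh2u z
      / (ch2u z + sh2u z * ch2v z - I * sh2v z) ^ 2 := by
  have hev : Wz gS2 =ᶠ[𝓝 z] fun w => (1 - ch2u w) / (ch2u w + sh2u w * ch2v w - I * sh2v w) := by
    filter_upwards [(isOpen_lt continuous_const continuous_re).mem_nhds hz] with w hw
    exact (hasWirtingerAt_gS2 hw).wz_eq
  have h := (((hasWirtingerAt_const 1 z).sub (hasWirtingerAt_cosh_two_re z)).div
    (((hasWirtingerAt_cosh_two_re z).add
      ((hasWirtingerAt_sinh_two_re z).mul (hasWirtingerAt_cosh_two_im z))).sub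
      ((hasWirtingerAt_const I z).mul (hasWirtingerAt_sinh_two_im z))) (dz_denom_ne_zero hz))
  rw [(h.congr_of_eventuallyEq hev).wzb_eq]
  congr 1
  linear_combination (ch2v z - ch2u z * ch2v z) * I_sq
    + ch2v z * ofReal_cosh_sq_sub_ofReal_sinh_sq (2 * z.re)

theorem one_sub_normSq_gS2 (hz : 0 < z.re) :
    1 - normSq (gS2 z) = 2 * Real.sinh (2 * z.re)
      / (Real.sinh (2 * z.re) + Real.cosh (2 * z.re) * Real.cosh (2 * z.im)) := by
  have hD := (gS2_denom_pos hz).ne'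
  have hnum : -1 - I * ch2u z * sh2v z
      = ((-1 : ℝ) : ℂ) + ((-(Real.cosh (2 * z.re) * Real.sinh (2 * z.im)) : ℝ) : ℂ) * I := by
    push_cast; ring
  have hden : sh2u z + ch2u z * ch2v z
      = ((Real.sinh (2 * z.re) + Real.cosh (2 * z.re) * Real.cosh (2 * z.im) : ℝ) : ℂ) := by
    push_cast; ring
  rw [gS2, hnum, hden, normSq_div, normSq_add_mul_I, normSq_ofReal]
  field_simp
  linear_combination Real.cosh (2 * z.re) ^ 2 * Real.cosh_sq_sub_sinh_sq (2 * z.im)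
    + Real.cosh_sq_sub_sinh_sq (2 * z.re)

theorem norm_gS2_lt_one (hz : 0 < z.re) : ‖gS2 z‖ < 1 := by
  have h : 0 < 1 - normSq (gS2 z) := by
    rw [one_sub_normSq_gS2 hz]
    exact div_pos (by linarith [sinh_two_re_pos hz]) (gS2_denom_pos hz)
  rw [← sq_lt_one_iff₀ (norm_nonneg _), ← normSq_eq_norm_sq]
  linarith

theorem NS_gS2 (hz : 0 < z.re) : NS (gS2 z) = 2 * sh2u z / (sh2u z + ch2u z * ch2v z) := by
  rw [NS, one_sub_normSq_gS2 hz]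
  push_cast
  rfl

theorem conj_gS2 (z : ℂ) :
    conj (gS2 z) = (-1 + I * ch2u z * sh2v z) / (sh2u z + ch2u z * ch2v z) := by
  simp only [gS2, map_div₀, map_sub, map_add, map_mul, map_neg, map_one, conj_I, conj_ofReal]
  ring

end HalfPlane

theorem stmt18 : ∀ z : ℂ, 0 < z.re →
    ‖gS2 z‖ < 1 ∧
    (Wzb (Wz gS2) z + (2 * conj (gS2 z) / NS (gS2 z)) * Wz gS2 z * Wzb gS2 z = 0) ∧
    Wz gS2 z = -((Real.cosh (2*z.re) : ℂ) - 1)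
        * ((Real.cosh (2*z.re) : ℂ) + (Real.sinh (2*z.re) : ℂ) * (Real.cosh (2*z.im) : ℂ)
            + I * (Real.sinh (2*z.im) : ℂ))
        / ((Real.sinh (2*z.re) : ℂ) + (Real.cosh (2*z.re) : ℂ) * (Real.cosh (2*z.im) : ℂ))^2 ∧
    Wz gS2 z ≠ 0 := by
  intro z hz
  have hg := hasWirtingerAt_gS2 hz
  have hD := gS2_denom_ne_zero hz
  have hF := dz_denom_ne_zero hz
  have hB : sh2u z ≠ 0 := by exact_mod_cast (sinh_two_re_pos hz).ne'
  have hA : ch2u z ≠ 1 := by exact_mod_cast (Real.one_lt_cosh.2 (by positivity)).ne'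
  refine ⟨norm_gS2_lt_one hz, ?_, ?_, ?_⟩ <;> rw [hg.wz_eq]
  · rw [wzb_wz_gS2 hz, hg.wzb_eq, conj_gS2, NS_gS2 hz]
    field_simp
    linear_combination (1 - I * ch2u z * sh2v z) * ofReal_cosh_sq_sub_ofReal_sinh_sq (2 * z.re)
  · rw [div_eq_div_iff hF (pow_ne_zero 2 hD)]
    linear_combination (ch2u z - 1) * mul_dz_denom_eq_gS2_denom_sq z
  · exact div_ne_zero (sub_ne_zero.2 hA.symm) hF
end
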